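/- For all nonnegative integers b, k and all m, the inversion identity p_k^{(b)}(m) = ∑_{j=0}^{k} (-1)^j * binom(2b+j, j) * q_{k-j}^{(b)}(m) holds, where p_j^{(b)}(m) = binom(m-b-1, j) * binom(m+b+j, j) and q_j^{(b)}(m) = binom(m+b, j) * binom(m-b-1+j, j). -/

import Mathlib

/-!
Put `x = m + b` and `c = -(2b + 1)`. Then `p_k = C(x + c, k) C(x + k, k)`,
`q_l = C(x, l) C(x + c + l, l)` and `(-1)^j C(2b + j, j) = C(c, j)`, so the claim is the identity
`C(x + c, k) C(x + k, k) = ∑_{j + l = k} C(c, j) C(x, l) C(x + c + l, l)`,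
valid in every commutative binomial ring. To prove it, expand
`C(x + c + l, l) = C((c - j) + (x + k), l)` by Vandermonde, merge
`C(c, j) C(c - j, i) = C(j + i, j) C(c, j + i)`, and regroup the triple sum by `s = j + i`.
The inner sum is then a Vandermonde convolution equal to `C(x + s, k)`, the product
`C(x + s, k) C(x + k, k - s)` equals `C(x + k, k) C(x, k - s)`, and a last Vandermonde
finishes.
-/

/-- Binomial coefficient with arbitrary (rational) upper argument:
`binom(x,k) = x(x-1)...(x-k+1)/k!`. -/
noncomputable def qbinom (x : ℚ) (k : ℕ) : ℚ :=
  (∏ i ∈ Finset.range k, (x - i)) / (Nat.factorial k)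

/-- `p_j^{(b)}(m) = binom(m-b-1, j) * binom(m+b+j, j)`. -/
noncomputable def pP (b j : ℕ) (m : ℚ) : ℚ :=
  qbinom (m - b - 1) j * qbinom (m + b + j) j

/-- `q_j^{(b)}(m) = binom(m+b, j) * binom(m-b-1+j, j)`. -/
noncomputable def qP (b j : ℕ) (m : ℚ) : ℚ :=
  qbinom (m + b) j * qbinom (m - b - 1 + j) j

open Finset Polynomial

theorem Finset.Nat.sum_antidiagonal_sum_antidiagonal_assoc {M : Type*} [AddCommMonoid M] (n : ℕ)
    (f : ℕ → ℕ → ℕ → M) :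
    ∑ p ∈ antidiagonal n, ∑ q ∈ antidiagonal p.2, f p.1 q.1 q.2 =
      ∑ p ∈ antidiagonal n, ∑ q ∈ antidiagonal p.1, f q.1 q.2 p.2 := by
  simp only [sum_sigma']
  apply sum_nbij' (fun ⟨⟨i, _⟩, ⟨j, k⟩⟩ ↦ ⟨(i + j, k), (i, j)⟩)
    (fun ⟨⟨_, k⟩, ⟨i, j⟩⟩ ↦ ⟨(i, j + k), (j, k)⟩) <;> aesop (add simp [add_assoc])

theorem descPochhammer_smeval_eq_prod_range {R : Type*} [CommRing R] (r : R) (n : ℕ) :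
    (descPochhammer ℤ n).smeval r = ∏ i ∈ range n, (r - i) := by
  rw [← descPochhammer_eval_eq_prod_range, ← descPochhammer_map (Int.castRingHom R), eval_map]
  exact (aeval_eq_smeval r _).symm

namespace Ring

variable {R : Type*} [CommRing R] [BinomialRing R]

theorem choose_neg_natCast_add_one (n j : ℕ) :
    choose (-(n + 1 : R)) j = (-1) ^ j * ((n + j).choose j : R) := by
  rw [choose_neg, show (n + 1 : R) + j - 1 = ((n + j : ℕ) : R) by push_cast; ring,
    choose_natCast, Units.smul_def, Int.coe_negOnePow_natCast, zsmul_eq_mul]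
  push_cast
  rfl

theorem choose_add_mul_choose_add (x : R) (s t : ℕ) :
    choose (x + s) (s + t) * choose (x + s + t) t = choose (x + s + t) (s + t) * choose x t := by
  -- both sides equal `C(s + 2t, t) • C(x + s + t, s + 2t)`
  have h₁ := choose_add_smul_choose x t (s + t)
  have h₂ := choose_add_smul_choose (x + s) (s + t) t
  rw [← Nat.choose_symm_add, add_comm t, Nat.cast_add, ← add_assoc] at h₁
  rw [← h₁, mul_comm, ← h₂]

theorem sum_antidiagonal_choose_mul_choose_add (x : R) (s r : ℕ) :
    ∑ p ∈ antidiagonal s, (s.choose p.1 : R) * choose x (p.2 + r) = choose (x + s) (s + r) := by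
  rw [add_comm x, add_choose_eq _ (Commute.all _ _),
    Nat.sum_antidiagonal_eq_sum_range_succ (fun i j ↦ choose (s : R) i * choose x j),
    Nat.sum_antidiagonal_eq_sum_range_succ (fun i j ↦ (s.choose i : R) * choose x (j + r))]
  refine sum_subset_zero_on_sdiff (range_subset_range.2 (by omega)) (fun i hi ↦ ?_)
    (fun i hi ↦ ?_)
  · rw [mem_sdiff, mem_range, mem_range] at hi
    rw [choose_natCast, Nat.choose_eq_zero_of_lt (by omega), Nat.cast_zero, zero_mul]
  · rw [choose_natCast, show s + r - i = s - i + r by have := mem_range.1 hi; omega]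

theorem choose_add_mul_choose_add_eq_sum_antidiagonal (x c : R) (k : ℕ) :
    choose (x + c) k * choose (x + k) k =
      ∑ p ∈ antidiagonal k, choose c p.1 * (choose x p.2 * choose (x + c + p.2) p.2) := by
  set f : ℕ → ℕ → ℕ → R := fun j i r ↦
    ((j + i).choose j : R) * choose c (j + i) * choose x (i + r) * choose (x + k) r
  have expand : ∀ p ∈ antidiagonal k, choose c p.1 * (choose x p.2 * choose (x + c + p.2) p.2) =
      ∑ q ∈ antidiagonal p.2, f p.1 q.1 q.2 := by
    rintro ⟨j, l⟩ hjl
    simp only [HasAntidiagonal.mem_antidiagonal] at hjl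
    have hsplit : x + c + l = (c - j) + (x + k) := by rw [← hjl]; push_cast; ring
    rw [hsplit, add_choose_eq _ (Commute.all _ _), mul_sum, mul_sum]
    refine sum_congr rfl fun ⟨i, r⟩ hir ↦ ?_
    simp only [HasAntidiagonal.mem_antidiagonal] at hir
    have merge := choose_smul_choose c (Nat.le_add_right j i)
    rw [Nat.add_sub_cancel_left, nsmul_eq_mul] at merge
    simp only [f, hir]
    linear_combination -(choose x l * choose (x + k) r) * merge
  have regroup : ∀ p ∈ antidiagonal k, ∑ q ∈ antidiagonal p.1, f q.1 q.2 p.2 =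
      choose (x + k) k * (choose c p.1 * choose x p.2) := by
    rintro ⟨s, r⟩ hsr
    simp only [HasAntidiagonal.mem_antidiagonal] at hsr
    calc ∑ q ∈ antidiagonal s, f q.1 q.2 r
        = choose c s * choose (x + k) r *
            ∑ q ∈ antidiagonal s, (s.choose q.1 : R) * choose x (q.2 + r) := by
          rw [mul_sum]
          refine sum_congr rfl fun ⟨j, i⟩ hji ↦ ?_
          simp only [HasAntidiagonal.mem_antidiagonal] at hji
          simp only [f, hji, add_comm i r]
          ring
      _ = choose (x + k) k * (choose c s * choose x r) := by
          rw [sum_antidiagonal_choose_mul_choose_add, ← hsr, Nat.cast_add, ← add_assoc,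
            mul_assoc, mul_comm (choose _ r), choose_add_mul_choose_add]
          ring
  rw [sum_congr rfl expand, Nat.sum_antidiagonal_sum_antidiagonal_assoc, sum_congr rfl regroup,
    ← mul_sum, ← add_choose_eq _ (Commute.all _ _), add_comm c, mul_comm]

end Ring

theorem qbinom_eq_choose (x : ℚ) (k : ℕ) : qbinom x k = Ring.choose x k := by
  rw [Ring.choose_eq_smul, descPochhammer_smeval_eq_prod_range, qbinom, smul_eq_mul,
    div_eq_inv_mul]

theorem stmt3 (b k : ℕ) (m : ℚ) :
    pP b k m = ∑ j ∈ Finset.range (k + 1),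
      (-1 : ℚ) ^ j * (Nat.choose (2 * b + j) j : ℚ) * qP b (k - j) m := by
  have hx : m + b + -(((2 * b : ℕ) : ℚ) + 1) = m - b - 1 := by push_cast; ring
  have key :=
    Ring.choose_add_mul_choose_add_eq_sum_antidiagonal (m + b) (-(((2 * b : ℕ) : ℚ) + 1)) k
  rw [hx, Nat.sum_antidiagonal_eq_sum_range_succ_mk] at key
  simpa only [pP, qP, qbinom_eq_choose, Ring.choose_neg_natCast_add_one] using key
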